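/- Let m/n ∈ (0,1/2) in lowest terms with m > 1 and left Farey parent u/v, let R = O[m,n-1], and let ψ(k) = k - #(R ∩ [0,k]). Then k ∈ {0,…,m-2} with k ∉ R is m/n-admissible if and only if ψ(k) is u/v-admissible (as an element of {0,…,u-1}). -/
import Mathlib


/-- The least κ ≥ 0 with r + κm ≡ s (mod n). -/
noncomputable def kappaLeast (n m r s : ℕ) : ℕ :=
  sInf {j : ℕ | ((r + j * m : ℕ) : ZMod n) = (s : ZMod n)}

/-- The orbit segment O_{m/n}[r,s]. -/
noncomputable def orbSeg (n m r s : ℕ) : Finset (ZMod n) :=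
  (Finset.range (kappaLeast n m r s + 1)).image (fun j => ((r + j * m : ℕ) : ZMod n))

/-- k ∈ {0,…,a-1} is a/b-admissible if [k+1,a-1] ∩ O_{a/b}[k,0] = ∅. -/
def IsAdmissible (a b k : ℕ) : Prop :=
  ∀ r : ℕ, k + 1 ≤ r → r ≤ a - 1 → ((r : ZMod b) ∉ orbSeg b a k 0)

/-- ψ(k) = k - #(R ∩ [0,k]) where R = O_{m/n}[m, n-1]. -/
noncomputable def psiFun (n m k : ℕ) : ℕ :=
  k - ((orbSeg n m m (n - 1)).filter (fun x => x.val ≤ k)).card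

def cF (n m j : ℕ) : ℕ := (j * (n - m)) % n
def dF (v u j : ℕ) : ℕ := (j * (v - u)) % v

section
variable {m n u v : ℕ}

lemma coprime_nv (hnat : v * m = n * u + 1) : Nat.Coprime n v := by
  have hZ : (m : ℤ) * v - (n : ℤ) * u = 1 := by
    have := congrArg (Nat.cast : ℕ → ℤ) hnat; push_cast at this; linarith
  have : Nat.gcd n v ∣ 1 := by
    have h1 : (Nat.gcd n v : ℤ) ∣ 1 := by
      have hd1 : (Nat.gcd n v : ℤ) ∣ (n : ℤ) := Int.natCast_dvd_natCast.mpr (Nat.gcd_dvd_left n v)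
      have hd2 : (Nat.gcd n v : ℤ) ∣ (v : ℤ) := Int.natCast_dvd_natCast.mpr (Nat.gcd_dvd_right n v)
      calc (Nat.gcd n v : ℤ) ∣ (m : ℤ) * v - (n : ℤ) * u := dvd_sub (hd2.mul_left m) (hd1.mul_right u)
        _ = 1 := hZ
    exact_mod_cast h1
  exact Nat.eq_one_of_dvd_one this

lemma star (hnat : v * m = n * u + 1) (hvn : v < n) (hv0 : 0 < v) (hmn' : m < n)
    {j : ℕ} (hj : j < v) : v * cF n m j + j = n * dF v u j := by
  have hn0 : 0 < n := hv0.trans hvn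
  have hco : Nat.Coprime n v := coprime_nv hnat
  have hmodn : (v * cF n m j + j) ≡ (n * dF v u j) [MOD n] := by
    apply (ZMod.natCast_eq_natCast_iff _ _ n).mp
    push_cast [cF, ZMod.natCast_mod, Nat.cast_sub hmn'.le]
    have h1 : ((v : ZMod n)) * m = 1 := by
      have := congrArg (Nat.cast : ℕ → ZMod n) hnat
      push_cast at this; simpa [ZMod.natCast_self] using this
    have h2 : ((n : ZMod n)) = 0 := ZMod.natCast_self n
    linear_combination ((v : ZMod n) * j - (dF v u j : ZMod n)) * h2 - (j : ZMod n) * h1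
  have hmodv : (v * cF n m j + j) ≡ (n * dF v u j) [MOD v] := by
    apply (ZMod.natCast_eq_natCast_iff _ _ v).mp
    push_cast [dF, ZMod.natCast_mod, Nat.cast_sub (le_of_lt (by nlinarith : u < v))]
    have h1 : ((n : ZMod v)) * u + 1 = 0 := by
      have := congrArg (Nat.cast : ℕ → ZMod v) hnat
      push_cast at this; simpa [ZMod.natCast_self] using this.symm
    have h2 : ((v : ZMod v)) = 0 := ZMod.natCast_self v
    linear_combination ((cF n m j : ZMod v) - (n : ZMod v) * j) * h2 + (j : ZMod v) * h1
  have hmul : (v * cF n m j + j) ≡ (n * dF v u j) [MOD n * v] :=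
    (Nat.modEq_and_modEq_iff_modEq_mul hco).mp ⟨hmodn, hmodv⟩
  have hc : cF n m j < n := Nat.mod_lt _ hn0
  have hd : dF v u j < v := Nat.mod_lt _ hv0
  exact hmul.eq_of_lt_of_lt (by nlinarith) (by nlinarith)
end

section
variable {m n u v : ℕ}

lemma d_le_iff (hnat : v * m = n * u + 1) (hvn : v < n) (hv0 : 0 < v) (hmn' : m < n)
    {j j' : ℕ} (hj : j < v) (hj' : j' < v) :
    cF n m j ≤ cF n m j' ↔ dF v u j ≤ dF v u j' := by
  have s1 := star hnat hvn hv0 hmn' hj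
  have s2 := star hnat hvn hv0 hmn' hj'
  constructor
  · intro h
    have h2 : v * cF n m j ≤ v * cF n m j' := Nat.mul_le_mul_left v h
    have h3 : n * dF v u j < n * (dF v u j' + 1) := by rw [Nat.mul_add, Nat.mul_one]; omega
    have := Nat.lt_of_mul_lt_mul_left h3
    omega
  · intro h
    have h2 : n * dF v u j ≤ n * dF v u j' := Nat.mul_le_mul_left n h
    have h3 : v * cF n m j < v * (cF n m j' + 1) := by rw [Nat.mul_add, Nat.mul_one]; omega
    have := Nat.lt_of_mul_lt_mul_left h3
    omega

lemma cd_inj (hnat : v * m = n * u + 1) (hvn : v < n) (hv0 : 0 < v) (hmn' : m < n)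
    {j j' : ℕ} (hj : j < v) (hj' : j' < v) (h : cF n m j = cF n m j') : j = j' := by
  have s1 := star hnat hvn hv0 hmn' hj
  have s2 := star hnat hvn hv0 hmn' hj'
  have h1 : dF v u j ≤ dF v u j' := (d_le_iff hnat hvn hv0 hmn' hj hj').mp h.le
  have h2 : dF v u j' ≤ dF v u j := (d_le_iff hnat hvn hv0 hmn' hj' hj).mp h.ge
  have h3 : n * dF v u j = n * dF v u j' := by rw [le_antisymm h1 h2]
  have h4 : v * cF n m j = v * cF n m j' := by rw [h]
  omega

lemma dd_inj (hnat : v * m = n * u + 1) (hvn : v < n) (hv0 : 0 < v) (hmn' : m < n)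
    {j j' : ℕ} (hj : j < v) (hj' : j' < v) (h : dF v u j = dF v u j') : j = j' := by
  have h1 := (d_le_iff hnat hvn hv0 hmn' hj hj').mpr h.le
  have h2 := (d_le_iff hnat hvn hv0 hmn' hj' hj).mpr h.ge
  exact cd_inj hnat hvn hv0 hmn' hj hj' (le_antisymm h1 h2)

lemma c_lt_m_iff (hnat : v * m = n * u + 1) (hvn : v < n) (hv0 : 0 < v) (hmn' : m < n)
    {j : ℕ} (hj : j < v) : cF n m j < m ↔ dF v u j ≤ u := by
  have s1 := star hnat hvn hv0 hmn' hj
  constructor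
  · intro h
    have h2 : v * (cF n m j + 1) ≤ v * m := Nat.mul_le_mul_left v (by omega)
    rw [Nat.mul_add, Nat.mul_one] at h2
    have h3 : n * dF v u j ≤ n * u := by omega
    exact Nat.le_of_mul_le_mul_left h3 (by omega)
  · intro h
    have h2 : n * dF v u j ≤ n * u := Nat.mul_le_mul_left n h
    have h3 : v * cF n m j < v * m := by omega
    exact Nat.lt_of_mul_lt_mul_left h3

lemma d_eq_u_imp (hnat : v * m = n * u + 1) (hvn : v < n) (hv0 : 0 < v) (hmn' : m < n)
    {j : ℕ} (hj : j < v) (h : dF v u j = u) : j = v - 1 := by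
  have s1 := star hnat hvn hv0 hmn' hj
  have hcm : cF n m j < m := (c_lt_m_iff hnat hvn hv0 hmn' hj).mpr h.le
  have e0 : m = cF n m j + (m - cF n m j) := by omega
  have e1 : v * m = v * cF n m j + v * (m - cF n m j) := by
    calc v * m = v * (cF n m j + (m - cF n m j)) := by rw [← e0]
      _ = v * cF n m j + v * (m - cF n m j) := Nat.mul_add v _ _
  have e2 : v * 1 ≤ v * (m - cF n m j) := Nat.mul_le_mul_left v (by omega)
  have e3 : n * dF v u j = n * u := by rw [h]
  omega
end

lemma kappaLeast_eq_of {n m r s x : ℕ}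
    (hx : ((r + x * m : ℕ) : ZMod n) = (s : ZMod n))
    (hmin : ∀ y < x, ((r + y * m : ℕ) : ZMod n) ≠ (s : ZMod n)) :
    kappaLeast n m r s = x := by
  refine le_antisymm (Nat.sInf_le hx) ?_
  by_contra h
  push_neg at h
  have hne : {j : ℕ | ((r + j * m : ℕ) : ZMod n) = (s : ZMod n)}.Nonempty := ⟨x, hx⟩
  exact hmin _ h (Nat.sInf_mem hne)

lemma mem_orbSeg {n m r s : ℕ} {x : ZMod n} :
    x ∈ orbSeg n m r s ↔ ∃ j ≤ kappaLeast n m r s, x = ((r + j * m : ℕ) : ZMod n) := by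
  simp [orbSeg, Finset.mem_image, Nat.lt_succ_iff, eq_comm]

section
variable {m n u v : ℕ}

/-- cast injectivity below n -/
lemma natCast_inj_lt (hn0 : 0 < n) {a b : ℕ} (ha : a < n) (hb : b < n)
    (h : (a : ZMod n) = (b : ZMod n)) : a = b := by
  haveI : NeZero n := ⟨hn0.ne'⟩
  rw [← ZMod.val_cast_of_lt ha, ← ZMod.val_cast_of_lt hb, h]

lemma vm_one (hnat : v * m = n * u + 1) : (v : ZMod n) * (m : ZMod n) = 1 := by
  have := congrArg (Nat.cast : ℕ → ZMod n) hnat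
  push_cast at this
  simpa [ZMod.natCast_self] using this

lemma nu_negone (hnat : v * m = n * u + 1) : (n : ZMod v) * (u : ZMod v) = -1 := by
  have := congrArg (Nat.cast : ℕ → ZMod v) hnat
  push_cast at this
  rw [ZMod.natCast_self] at this
  linear_combination -this

lemma cancel_m (hnat : v * m = n * u + 1) {a b : ZMod n}
    (h : a * (m : ZMod n) = b * (m : ZMod n)) : a = b := by
  have h2 := congrArg (· * (v : ZMod n)) h
  calc a = a * ((v : ZMod n) * m) := by rw [vm_one hnat, mul_one]
    _ = b * ((v : ZMod n) * m) := by ring_nf; ring_nf at h2; linear_combination h2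
    _ = b := by rw [vm_one hnat, mul_one]

lemma cancel_u (hnat : v * m = n * u + 1) {a b : ZMod v}
    (h : a * (u : ZMod v) = b * (u : ZMod v)) : a = b := by
  have h2 := congrArg (· * (n : ZMod v)) h
  have e : ∀ x : ZMod v, x * u * n = -x := by
    intro x
    calc x * u * n = x * (n * u) := by ring
      _ = x * (-1) := by rw [nu_negone hnat]
      _ = -x := by ring
  rw [e, e] at h2
  exact neg_injective h2

lemma c_cast (hmn' : m ≤ n) (t : ℕ) :
    ((cF n m t : ℕ) : ZMod n) = -((t : ZMod n) * (m : ZMod n)) := by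
  rw [cF, ZMod.natCast_mod]
  push_cast [Nat.cast_sub hmn']
  rw [ZMod.natCast_self]
  ring

lemma d_cast (huv' : u ≤ v) (t : ℕ) :
    ((dF v u t : ℕ) : ZMod v) = -((t : ZMod v) * (u : ZMod v)) := by
  rw [dF, ZMod.natCast_mod]
  push_cast [Nat.cast_sub huv']
  rw [ZMod.natCast_self]
  ring
end

section
variable {m n u v : ℕ}

lemma u_lt_m (hnat : v * m = n * u + 1) (hvn : v < n) (hm0 : 0 < m) : u < m := by
  have h1 : v * m ≤ n * m := Nat.mul_le_mul_right m hvn.le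
  by_contra h
  push_neg at h
  have h2 : n * m ≤ n * u := Nat.mul_le_mul_left n h
  omega

lemma kappaR (hnat : v * m = n * u + 1) (hvn : v < n) (hv0 : 0 < v) (hmn' : m < n)
    (hm0 : 0 < m) : kappaLeast n m m (n - 1) = n - v - 1 := by
  have hn0 : 0 < n := hv0.trans hvn
  have hum : u < m := u_lt_m hnat hvn hm0
  have hZ : (v : ℤ) * m = (n : ℤ) * u + 1 := by exact_mod_cast congrArg (Nat.cast : ℕ → ℤ) hnat
  have hid : m + (n - v - 1) * m = (n - 1) + n * (m - u - 1) := by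
    zify [hvn.le, hum.le, (by omega : 1 ≤ n), (by omega : 1 ≤ n - v), (by omega : 1 ≤ m - u)]
    linear_combination -hZ
  apply kappaLeast_eq_of
  · rw [hid]
    rw [Nat.cast_add, Nat.cast_mul, ZMod.natCast_self, zero_mul, add_zero]
  · intro y hy hcon
    have e1 : m + y * m = (y + 1) * m := by rw [Nat.add_mul, one_mul]; omega
    have e2 : m + (n - v - 1) * m = (n - v) * m := by
      obtain ⟨a, ha⟩ : ∃ a, n - v = a + 1 := ⟨n - v - 1, by omega⟩
      rw [ha]
      simp [Nat.add_mul]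
      omega
    have hc2 : (((n - v) * m : ℕ) : ZMod n) = ((n - 1 : ℕ) : ZMod n) := by
      rw [← e2, hid, Nat.cast_add, Nat.cast_mul, ZMod.natCast_self, zero_mul, add_zero]
    rw [e1] at hcon
    have : (((y + 1) : ℕ) : ZMod n) = (((n - v) : ℕ) : ZMod n) := by
      apply cancel_m hnat
      rw [show (((y + 1) : ℕ) : ZMod n) * (m : ZMod n) = (((y + 1) * m : ℕ) : ZMod n) by push_cast; ring,
        show (((n - v) : ℕ) : ZMod n) * (m : ZMod n) = (((n - v) * m : ℕ) : ZMod n) by push_cast; ring,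
        hcon, hc2]
    have := natCast_inj_lt hn0 (by omega) (by omega) this
    omega

lemma mem_R_iff (hnat : v * m = n * u + 1) (hvn : v < n) (hv0 : 0 < v) (hmn' : m < n)
    (hm0 : 0 < m) {x : ZMod n} :
    x ∈ orbSeg n m m (n - 1) ↔ ∃ i, 1 ≤ i ∧ i ≤ n - v ∧ x = ((i * m : ℕ) : ZMod n) := by
  rw [mem_orbSeg, kappaR hnat hvn hv0 hmn' hm0]
  constructor
  · rintro ⟨j, hj, rfl⟩
    exact ⟨j + 1, by omega, by omega, by rw [Nat.add_mul, one_mul]; ring_nf⟩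
  · rintro ⟨i, hi1, hi2, rfl⟩
    have he : m + (i - 1) * m = i * m := by
      obtain ⟨w, rfl⟩ : ∃ w, i = w + 1 := ⟨i - 1, by omega⟩
      simp [Nat.add_mul]
      omega
    exact ⟨i - 1, by omega, by rw [he]⟩

lemma k_eq_c (hnat : v * m = n * u + 1) (hvn : v < n) (hv0 : 0 < v) (hmn' : m < n)
    (hm0 : 0 < m) {k : ℕ} (hk' : k < n) (hkR : ((k : ZMod n)) ∉ orbSeg n m m (n - 1)) :
    ∃ i0, i0 < v ∧ k = cF n m i0 := by
  have hn0 : 0 < n := hv0.trans hvn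
  set t := (k * v) % n with ht
  have htn : t < n := Nat.mod_lt _ hn0
  have hkm : ((t * m : ℕ) : ZMod n) = (k : ZMod n) := by
    rw [ht]
    push_cast [ZMod.natCast_mod]
    calc (k : ZMod n) * v * m = (k : ZMod n) * ((v : ZMod n) * m) := by ring
      _ = k := by rw [vm_one hnat, mul_one]
  rcases Nat.lt_or_ge t 1 with h0 | h1
  · refine ⟨0, hv0, ?_⟩
    have : t = 0 := by omega
    rw [this] at hkm
    simp only [Nat.zero_mul, Nat.cast_zero] at hkm
    have : k = 0 := by
      have := natCast_inj_lt hn0 (by omega : 0 < n) hk' (by simpa using hkm)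
      omega
    simp [this, cF]
  rcases Nat.lt_or_ge (n - v) t with h2 | h2
  swap
  · exfalso
    exact hkR ((mem_R_iff hnat hvn hv0 hmn' hm0).mpr ⟨t, h1, h2, hkm.symm⟩)
  · refine ⟨n - t, by omega, ?_⟩
    have hb : cF n m (n - t) < n := Nat.mod_lt _ hn0
    apply natCast_inj_lt hn0 hk' hb
    rw [cF, ZMod.natCast_mod]
    push_cast [Nat.cast_sub hmn'.le, Nat.cast_sub htn.le]
    rw [ZMod.natCast_self]
    rw [← hkm]
    push_cast
    ring
end

section
variable {m n u v : ℕ}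

lemma kappa_k (hnat : v * m = n * u + 1) (hvn : v < n) (hv0 : 0 < v) (hmn' : m < n)
    {i0 : ℕ} (hi0 : i0 < v) : kappaLeast n m (cF n m i0) 0 = i0 := by
  have hn0 : 0 < n := hv0.trans hvn
  apply kappaLeast_eq_of
  · rw [Nat.cast_zero]
    push_cast [c_cast hmn'.le]
    ring
  · intro y hy hcon
    rw [Nat.cast_zero] at hcon
    push_cast [c_cast hmn'.le] at hcon
    have hym : ((y : ℕ) : ZMod n) * m = ((i0 : ℕ) : ZMod n) * m := by linear_combination hcon
    have := natCast_inj_lt hn0 (by omega) (by omega) (cancel_m hnat hym)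
    omega

lemma mem_orb_k (hnat : v * m = n * u + 1) (hvn : v < n) (hv0 : 0 < v) (hmn' : m < n)
    {i0 : ℕ} (hi0 : i0 < v) {x : ZMod n} :
    x ∈ orbSeg n m (cF n m i0) 0 ↔ ∃ j ≤ i0, x = ((cF n m j : ℕ) : ZMod n) := by
  rw [mem_orbSeg, kappa_k hnat hvn hv0 hmn' hi0]
  constructor
  · rintro ⟨j, hj, rfl⟩
    refine ⟨i0 - j, by omega, ?_⟩
    push_cast
    rw [c_cast hmn'.le, c_cast hmn'.le]
    push_cast [Nat.cast_sub hj]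
    ring
  · rintro ⟨j, hj, rfl⟩
    refine ⟨i0 - j, by omega, ?_⟩
    push_cast
    rw [c_cast hmn'.le, c_cast hmn'.le]
    push_cast [Nat.cast_sub hj]
    ring

lemma kappa_psi (hnat : v * m = n * u + 1) (hvn : v < n) (hv0 : 0 < v) (hmn' : m < n)
    (huv' : u ≤ v) {i0 : ℕ} (hi0 : i0 < v) : kappaLeast v u (dF v u i0) 0 = i0 := by
  apply kappaLeast_eq_of
  · rw [Nat.cast_zero]
    push_cast [d_cast huv']
    ring
  · intro y hy hcon
    rw [Nat.cast_zero] at hcon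
    push_cast [d_cast huv'] at hcon
    have hym : ((y : ℕ) : ZMod v) * u = ((i0 : ℕ) : ZMod v) * u := by linear_combination hcon
    have := natCast_inj_lt hv0 (by omega) (by omega) (cancel_u hnat hym)
    omega

lemma mem_orb_psi (hnat : v * m = n * u + 1) (hvn : v < n) (hv0 : 0 < v) (hmn' : m < n)
    (huv' : u ≤ v) {i0 : ℕ} (hi0 : i0 < v) {x : ZMod v} :
    x ∈ orbSeg v u (dF v u i0) 0 ↔ ∃ j ≤ i0, x = ((dF v u j : ℕ) : ZMod v) := by
  rw [mem_orbSeg, kappa_psi hnat hvn hv0 hmn' huv' hi0]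
  constructor
  · rintro ⟨j, hj, rfl⟩
    refine ⟨i0 - j, by omega, ?_⟩
    push_cast
    rw [d_cast huv', d_cast huv']
    push_cast [Nat.cast_sub hj]
    ring
  · rintro ⟨j, hj, rfl⟩
    refine ⟨i0 - j, by omega, ?_⟩
    push_cast
    rw [d_cast huv', d_cast huv']
    push_cast [Nat.cast_sub hj]
    ring
end

section
variable {m n u v : ℕ}

lemma c_lt_n (hn0 : 0 < n) (j : ℕ) : cF n m j < n := Nat.mod_lt _ hn0
lemma d_lt_v (hv0 : 0 < v) (j : ℕ) : dF v u j < v := Nat.mod_lt _ hv0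

lemma adm_m_iff (hnat : v * m = n * u + 1) (hvn : v < n) (hv0 : 0 < v) (hmn' : m < n)
    (hm0 : 0 < m) {i0 : ℕ} (hi0 : i0 < v) :
    IsAdmissible m n (cF n m i0) ↔ ∀ j ≤ i0, ¬(cF n m i0 < cF n m j ∧ cF n m j < m) := by
  have hn0 : 0 < n := hv0.trans hvn
  constructor
  · rintro H j hj ⟨h1, h2⟩
    exact H (cF n m j) (by omega) (by omega) ((mem_orb_k hnat hvn hv0 hmn' hi0).mpr ⟨j, hj, rfl⟩)
  · intro H r hr1 hr2 hmem
    obtain ⟨j, hj, he⟩ := (mem_orb_k hnat hvn hv0 hmn' hi0).mp hmem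
    have hre : r = cF n m j := natCast_inj_lt hn0 (by omega) (c_lt_n hn0 j) he
    exact H j hj ⟨by omega, by omega⟩

lemma adm_v_iff (hnat : v * m = n * u + 1) (hvn : v < n) (hv0 : 0 < v) (hmn' : m < n)
    (huv' : u ≤ v) (hu0 : 0 < u) {i0 : ℕ} (hi0 : i0 < v) :
    IsAdmissible u v (dF v u i0) ↔ ∀ j ≤ i0, ¬(dF v u i0 < dF v u j ∧ dF v u j < u) := by
  constructor
  · rintro H j hj ⟨h1, h2⟩
    exact H (dF v u j) (by omega) (by omega) ((mem_orb_psi hnat hvn hv0 hmn' huv' hi0).mpr ⟨j, hj, rfl⟩)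
  · intro H r hr1 hr2 hmem
    obtain ⟨j, hj, he⟩ := (mem_orb_psi hnat hvn hv0 hmn' huv' hi0).mp hmem
    have hre : r = dF v u j := natCast_inj_lt hv0 (by omega) (d_lt_v hv0 j) he
    exact H j hj ⟨by omega, by omega⟩
end

section
variable {m n u v : ℕ}

lemma cast_tm (hnat : v * m = n * u + 1) (x : ℕ) :
    ((((x * v) % n) * m : ℕ) : ZMod n) = (x : ZMod n) := by
  push_cast [ZMod.natCast_mod]
  calc (x : ZMod n) * v * m = (x : ZMod n) * ((v : ZMod n) * m) := by ring
    _ = x := by rw [vm_one hnat, mul_one]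

lemma t_of_mul (hnat : v * m = n * u + 1) (hn0 : 0 < n) {i : ℕ} (hi : i < n) :
    (((i * m) % n) * v) % n = i := by
  apply natCast_inj_lt hn0 (Nat.mod_lt _ hn0) hi
  push_cast [ZMod.natCast_mod]
  calc (i : ZMod n) * m * v = (i : ZMod n) * ((v : ZMod n) * m) := by ring
    _ = i := by rw [vm_one hnat, mul_one]

lemma mem_R_iff_t (hnat : v * m = n * u + 1) (hvn : v < n) (hv0 : 0 < v) (hmn' : m < n)
    (hm0 : 0 < m) {x : ℕ} (hx : x < n) :
    ((x : ZMod n) ∈ orbSeg n m m (n - 1)) ↔ (1 ≤ (x * v) % n ∧ (x * v) % n ≤ n - v) := by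
  have hn0 : 0 < n := hv0.trans hvn
  constructor
  · rintro hmem
    obtain ⟨i, h1, h2, he⟩ := (mem_R_iff hnat hvn hv0 hmn' hm0).mp hmem
    have : (x * v) % n = i := by
      apply natCast_inj_lt hn0 (Nat.mod_lt _ hn0) (by omega)
      push_cast [ZMod.natCast_mod]
      rw [show ((x : ZMod n)) * v = ((x : ZMod n)) * v from rfl]
      calc (x : ZMod n) * v = ((i * m : ℕ) : ZMod n) * v := by rw [← he]
        _ = (i : ZMod n) * ((v : ZMod n) * m) := by push_cast; ring
        _ = i := by rw [vm_one hnat, mul_one]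
    omega
  · rintro ⟨h1, h2⟩
    exact (mem_R_iff hnat hvn hv0 hmn' hm0).mpr ⟨(x * v) % n, h1, h2, (cast_tm hnat x).symm⟩

lemma psi_eq (hnat : v * m = n * u + 1) (hvn : v < n) (hv0 : 0 < v) (hmn' : m < n)
    (hm0 : 0 < m) {i0 : ℕ} (hi0 : i0 < v) :
    psiFun n m (cF n m i0) = dF v u i0 := by
  have hn0 : 0 < n := hv0.trans hvn
  set k := cF n m i0 with hkdef
  set D := dF v u i0 with hDdef
  have hk' : k < n := c_lt_n hn0 i0
  have hD : D < v := d_lt_v hv0 i0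
  -- A
  have horb : orbSeg n m m (n - 1)
      = (Finset.range (n - v)).image (fun j => (((j + 1) * m : ℕ) : ZMod n)) := by
    rw [orbSeg, kappaR hnat hvn hv0 hmn' hm0]
    have hnv : n - v - 1 + 1 = n - v := by omega
    rw [hnv]
    apply Finset.image_congr
    intro j _
    have : m + j * m = (j + 1) * m := by rw [Nat.add_mul, one_mul]; omega
    simp only
    rw [this]
  have cardR : ((orbSeg n m m (n - 1)).filter (fun x => x.val ≤ k)).card
      = ((Finset.range (n - v)).filter (fun j => ((j + 1) * m) % n ≤ k)).card := by
    haveI : NeZero n := ⟨by omega⟩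
    rw [horb, Finset.filter_image, Finset.card_image_of_injOn]
    · simp only [ZMod.val_natCast]
    · intro a ha b hb hab
      simp only [Finset.coe_filter, Set.mem_setOf_eq, Finset.mem_range] at ha hb
      have h1 : (((a + 1) : ℕ) : ZMod n) * m = (((b + 1) : ℕ) : ZMod n) * m := by
        push_cast at hab ⊢
        linear_combination hab
      have := natCast_inj_lt hn0 (by omega) (by omega) (cancel_m hnat h1)
      omega
  -- B
  have count1 : ((Finset.range (n - v)).filter (fun j => ((j + 1) * m) % n ≤ k)).card
      = ((Finset.range (k + 1)).filter
          (fun x => 1 ≤ (x * v) % n ∧ (x * v) % n ≤ n - v)).card := by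
    refine Finset.card_bij (fun j _ => ((j + 1) * m) % n) ?_ ?_ ?_
    · intro a ha
      simp only [Finset.mem_filter, Finset.mem_range] at ha ⊢
      have ht := t_of_mul hnat hn0 (by omega : a + 1 < n)
      exact ⟨by omega, by omega, by omega⟩
    · intro a ha b hb hab
      simp only [Finset.mem_filter, Finset.mem_range] at ha hb
      have h1 : (((a + 1) : ℕ) : ZMod n) * m = (((b + 1) : ℕ) : ZMod n) * m := by
        have := congrArg (fun y : ℕ => ((y : ℕ) : ZMod n)) hab
        simp only [ZMod.natCast_mod] at this
        push_cast at this ⊢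
        linear_combination this
      have := natCast_inj_lt hn0 (by omega) (by omega) (cancel_m hnat h1)
      omega
    · intro x hx
      simp only [Finset.mem_filter, Finset.mem_range] at hx
      obtain ⟨hx1, hx2, hx3⟩ := hx
      refine ⟨(x * v) % n - 1, ?_, ?_⟩
      · simp only [Finset.mem_filter, Finset.mem_range]
        have he : ((x * v) % n - 1 + 1) = (x * v) % n := by omega
        rw [he]
        constructor
        · omega
        · have : (((x * v) % n) * m) % n = x := by
            apply natCast_inj_lt hn0 (Nat.mod_lt _ hn0) (by omega)
            rw [ZMod.natCast_mod]
            exact cast_tm hnat x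
          omega
      · have he : ((x * v) % n - 1 + 1) = (x * v) % n := by omega
        show (((x * v) % n - 1 + 1) * m) % n = x
        rw [he]
        apply natCast_inj_lt hn0 (Nat.mod_lt _ hn0) (by omega)
        rw [ZMod.natCast_mod]
        exact cast_tm hnat x
  -- C
  have count2 : ((Finset.range v).filter (fun j => cF n m j ≤ k)).card
      = ((Finset.range (k + 1)).filter
          (fun x => ¬(1 ≤ (x * v) % n ∧ (x * v) % n ≤ n - v))).card := by
    refine Finset.card_bij (fun j _ => cF n m j) ?_ ?_ ?_
    · intro j hj
      simp only [Finset.mem_filter, Finset.mem_range] at hj ⊢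
      refine ⟨by omega, ?_⟩
      have tc : (cF n m j * v) % n = (n - j) % n := by
        apply natCast_inj_lt hn0 (Nat.mod_lt _ hn0) (Nat.mod_lt _ hn0)
        push_cast [ZMod.natCast_mod, Nat.cast_sub (by omega : j ≤ n)]
        rw [c_cast hmn'.le, ZMod.natCast_self]
        calc -((j : ZMod n) * m) * v = -((j : ZMod n) * ((v : ZMod n) * m)) := by ring
          _ = -(j : ZMod n) := by rw [vm_one hnat, mul_one]
          _ = 0 - (j : ZMod n) := by ring
      rcases Nat.eq_zero_or_pos j with h0 | h0
      · subst h0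
        simp only [Nat.sub_zero, Nat.mod_self] at tc
        omega
      · have h4 : (n - j) % n = n - j := Nat.mod_eq_of_lt (by omega)
        rw [h4] at tc
        have h5 := hj.1
        omega
    · intro a ha b hb hab
      simp only [Finset.mem_filter, Finset.mem_range] at ha hb
      exact cd_inj hnat hvn hv0 hmn' ha.1 hb.1 hab
    · intro x hx
      simp only [Finset.mem_filter, Finset.mem_range] at hx
      obtain ⟨hx1, hx2⟩ := hx
      have hxn : x < n := by omega
      have hxR : ((x : ZMod n)) ∉ orbSeg n m m (n - 1) := by
        intro hmem
        exact hx2 ((mem_R_iff_t hnat hvn hv0 hmn' hm0 hxn).mp hmem)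
      obtain ⟨j, hj, hxe⟩ := k_eq_c hnat hvn hv0 hmn' hm0 hxn hxR
      exact ⟨j, by simp only [Finset.mem_filter, Finset.mem_range]; exact ⟨hj, by omega⟩, hxe.symm⟩
  -- D
  have total : ((Finset.range (k + 1)).filter
          (fun x => 1 ≤ (x * v) % n ∧ (x * v) % n ≤ n - v)).card
      + ((Finset.range (k + 1)).filter
          (fun x => ¬(1 ≤ (x * v) % n ∧ (x * v) % n ≤ n - v))).card = k + 1 := by
    rw [Finset.card_filter_add_card_filter_not, Finset.card_range]
  -- E
  have countD : ((Finset.range v).filter (fun j => cF n m j ≤ k)).card = D + 1 := by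
    have e1 : ((Finset.range v).filter (fun j => cF n m j ≤ k))
        = ((Finset.range v).filter (fun j => dF v u j ≤ D)) := by
      apply Finset.filter_congr
      intro j hj
      simp only [Finset.mem_range] at hj
      rw [hkdef, hDdef]
      exact iff_of_eq (congrArg _ rfl) |>.trans (d_le_iff hnat hvn hv0 hmn' hj hi0)
    rw [e1]
    have e2 : ((Finset.range v).filter (fun j => dF v u j ≤ D)).card
        = (Finset.range (D + 1)).card := by
      refine Finset.card_bij (fun j _ => dF v u j) ?_ ?_ ?_
      · intro j hj
        simp only [Finset.mem_filter, Finset.mem_range] at hj ⊢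
        omega
      · intro a ha b hb hab
        simp only [Finset.mem_filter, Finset.mem_range] at ha hb
        exact dd_inj hnat hvn hv0 hmn' ha.1 hb.1 hab
      · intro x hx
        simp only [Finset.mem_range] at hx
        refine ⟨(x * n) % v, ?_, ?_⟩
        · simp only [Finset.mem_filter, Finset.mem_range]
          have hd : dF v u ((x * n) % v) = x := by
            apply natCast_inj_lt hv0 (d_lt_v hv0 _) (by omega)
            rw [d_cast (by nlinarith : u ≤ v)]
            rw [ZMod.natCast_mod]
            push_cast
            calc -((x : ZMod v) * n * u) = -((x : ZMod v) * ((n : ZMod v) * u)) := by ring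
              _ = -((x : ZMod v) * (-1)) := by rw [nu_negone hnat]
              _ = x := by ring
          constructor
          · exact Nat.mod_lt _ hv0
          · omega
        · apply natCast_inj_lt hv0 (d_lt_v hv0 _) (by omega)
          rw [d_cast (by nlinarith : u ≤ v)]
          rw [ZMod.natCast_mod]
          push_cast
          calc -((x : ZMod v) * n * u) = -((x : ZMod v) * ((n : ZMod v) * u)) := by ring
            _ = -((x : ZMod v) * (-1)) := by rw [nu_negone hnat]
            _ = x := by ring
    rw [e2, Finset.card_range]
  -- F
  rw [psiFun, cardR, count1]
  omega
end

/-- for k ∈ {0,…,m-2} with k ∉ R, k is m/n-admissible iff ψ(k) is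
u/v-admissible. -/
theorem admissible_iff_psi_admissible (m n u v : ℕ)
    (hm : 1 < m) (h2 : 2 * m < n) (hmn : Nat.Coprime m n)
    (hv0 : 0 < v) (hvn : v < n) (huv : Nat.Coprime u v)
    (hfarey : (m : ℤ) * v - (n : ℤ) * u = 1)
    (k : ℕ) (hk : k ≤ m - 2) (hkR : ((k : ZMod n)) ∉ orbSeg n m m (n - 1)) :
    IsAdmissible m n k ↔ IsAdmissible u v (psiFun n m k) := by
  have hmn' : m < n := by omega
  have hnat : v * m = n * u + 1 := by
    have hz : (v * m : ℤ) = (n * u : ℤ) + 1 := by linarith [hfarey]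
    exact_mod_cast hz
  have hm0 : 0 < m := by omega
  have hn0 : 0 < n := by omega
  have hu0 : 0 < u := by
    rcases Nat.eq_zero_or_pos u with h0 | h0
    · exfalso
      rw [h0] at hnat
      simp only [Nat.mul_zero, Nat.zero_add] at hnat
      have := Nat.eq_one_of_mul_eq_one_left hnat
      omega
    · exact h0
  have huv' : u < v := by nlinarith [hnat, hmn', hv0]
  have hk' : k < n := by omega
  obtain ⟨i0, hi0, hke⟩ := k_eq_c hnat hvn hv0 hmn' hm0 hk' hkR
  subst hke
  rw [psi_eq hnat hvn hv0 hmn' hm0 hi0]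
  rw [adm_m_iff hnat hvn hv0 hmn' hm0 hi0,
    adm_v_iff hnat hvn hv0 hmn' huv'.le hu0 hi0]
  constructor
  · intro H j hj
    rintro ⟨h1, h2⟩
    have hjv : j < v := lt_of_le_of_lt hj hi0
    have hc1 : cF n m i0 < cF n m j := by
      by_contra hc
      push_neg at hc
      have := (d_le_iff hnat hvn hv0 hmn' hjv hi0).mp hc
      omega
    have hc2 : cF n m j < m := (c_lt_m_iff hnat hvn hv0 hmn' hjv).mpr h2.le
    exact H j hj ⟨hc1, hc2⟩
  · intro H j hj
    rintro ⟨h1, h2⟩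
    have hjv : j < v := lt_of_le_of_lt hj hi0
    have hd1 : dF v u i0 < dF v u j := by
      by_contra hc
      push_neg at hc
      have := (d_le_iff hnat hvn hv0 hmn' hjv hi0).mpr hc
      omega
    have hd2u : dF v u j ≤ u := (c_lt_m_iff hnat hvn hv0 hmn' hjv).mp h2
    have hd2 : dF v u j < u := by
      rcases eq_or_lt_of_le hd2u with he | hlt
      · exfalso
        have hjv1 : j = v - 1 := d_eq_u_imp hnat hvn hv0 hmn' hjv he
        have hji0 : j = i0 := by omega
        have : dF v u j = dF v u i0 := by rw [hji0]
        omega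
      · exact hlt
    exact H j hj ⟨hd1, hd2⟩
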